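/- Let 0 < α < 2, let δ > 0, let x be real, and let h : ℝ → ℝ be continuously differentiable on [x−δ, x]. Then the function t ↦ (x−t)^{1−α} h'(t) is interval integrable on [x−δ, x], and the continuous approximation of the derivative of h on a fractal space satisfies D^α h(x) = (A(α)/α) ∫_{x−δ}^x (x−t)^{1−α} h'(t) dt = (A(α)·Γ(2−α)/α) · D_C^ν h(x), where ν = α−1 and D_C^ν h(x) = (1/Γ(1−ν)) ∫_{x−δ}^x (x−t)^{−ν} h'(t) dt is Caputo's fractional derivative of order ν; i.e., the continuous approximation is proportional to Caputo's derivative. -/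
import Mathlib

open Real MeasureTheory intervalIntegral

/-- For `0 < α < 2`, `δ > 0` and `h` continuously differentiable on `[x−δ, x]`,
the function `t ↦ (x−t)^{1−α} h'(t)` is interval integrable on `[x−δ, x]`, and the
continuous approximation of the derivative of `h` on a fractal space,
`(A(α)/α) ∫_{x−δ}^x (x−t)^{1−α} h'(t) dt`, equals `(A(α)·Γ(2−α)/α)` times Caputo's
fractional derivative of order `ν = α − 1`,
`D_C^ν h(x) = (1/Γ(1−ν)) ∫_{x−δ}^x (x−t)^{-ν} h'(t) dt`. -/
theorem continuous_approx_proportional_to_caputo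
    (α : ℝ) (hα : 0 < α) (hα2 : α < 2) (A : ℝ)
    (hA : A = 2 * Real.pi ^ (α / 2) / Real.Gamma (α / 2))
    (ν : ℝ) (hν : ν = α - 1)
    (δ : ℝ) (hδ : 0 < δ) (x : ℝ) (h h' : ℝ → ℝ)
    (hderiv : ∀ t ∈ Set.Icc (x - δ) x, HasDerivAt h (h' t) t)
    (hcont : ContinuousOn h' (Set.Icc (x - δ) x)) :
    IntervalIntegrable (fun t => (x - t) ^ (1 - α) * h' t) volume (x - δ) x ∧
    A / α * ∫ t in (x - δ)..x, (x - t) ^ (1 - α) * h' t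
      = A * Real.Gamma (2 - α) / α *
        (1 / Real.Gamma (1 - ν) * ∫ t in (x - δ)..x, (x - t) ^ (-ν) * h' t) := by
  have hle : x - δ ≤ x := by linarith
  have hint : IntervalIntegrable (fun t => (x - t) ^ (1 - α)) volume (x - δ) x := by
    have := (intervalIntegrable_rpow' (a := 0) (b := δ) (r := 1 - α)
      (by linarith)).comp_sub_left x
    simpa using this.symm
  have hmul : IntervalIntegrable (fun t => (x - t) ^ (1 - α) * h' t) volume (x - δ) x :=
    hint.mul_continuousOn (by rwa [Set.uIcc_of_le hle])
  refine ⟨hmul, ?_⟩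
  have hΓ : Real.Gamma (2 - α) ≠ 0 := (Real.Gamma_pos_of_pos (by linarith)).ne'
  have hnu : (1 : ℝ) - ν = 2 - α := by rw [hν]; ring
  have hexp : -ν = 1 - α := by rw [hν]; ring
  rw [hnu, hexp]
  field_simp
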